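/- On the space of bounded alternating real functions on a group Γ, the defect norm ‖f‖ = sup_{g,h} |f(gh) − f(g) − f(h)| is equivalent to the supremum norm ‖f‖_∞; in particular there are constants such that ‖f‖_∞ ≤ ‖f‖ ≤ 3‖f‖_∞ (equivalence of norms). -/

import Mathlib

/-!
If the defect of `f` is at most `D`, induction gives `|f (g ^ n) - n * f g| ≤ (n + 1) * D`.
For bounded `f` the left side is at least `n * |f g| - C`, so letting `n → ∞` yields
`|f g| ≤ D`. The bound `‖f‖ ≤ 3 ‖f‖_∞` is the triangle inequality.
-/

/-- The defect norm of a real-valued function on a group. -/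
noncomputable def defectNorm {G : Type*} [Group G] (f : G → ℝ) : ℝ :=
  ⨆ p : G × G, |f (p.1 * p.2) - f p.1 - f p.2|

/-- The supremum norm of a real-valued function. -/
noncomputable def supNorm {G : Type*} (f : G → ℝ) : ℝ :=
  ⨆ g : G, |f g|

theorem le_of_forall_nat_mul_le_add {a b c : ℝ} (h : ∀ n : ℕ, n * a ≤ n * b + c) : a ≤ b := by
  by_contra! hba
  obtain ⟨n, hn⟩ := exists_nat_gt (c / (a - b))
  have hcn : c < n * (a - b) := (div_lt_iff₀ (sub_pos.mpr hba)).mp hn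
  linarith [h n]

theorem abs_sub_sub_le_add_add (a b c : ℝ) : |a - b - c| ≤ |a| + |b| + |c| :=
  (abs_sub _ _).trans (add_le_add_left (abs_sub _ _) _)

section Quasimorphism

variable {M : Type*} [Monoid M] {f : M → ℝ} {D : ℝ}

theorem abs_map_pow_sub_nat_mul_le (hD : ∀ g h, |f (g * h) - f g - f h| ≤ D) (g : M) (n : ℕ) :
    |f (g ^ n) - n * f g| ≤ (n + 1) * D := by
  induction n with
  | zero => simpa using hD 1 1
  | succ n ih =>
    calc |f (g ^ (n + 1)) - ↑(n + 1) * f g|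
        = |(f (g ^ n * g) - f (g ^ n) - f g) + (f (g ^ n) - n * f g)| := by
          rw [pow_succ]; push_cast; ring_nf
      _ ≤ D + (n + 1) * D := (abs_add_le _ _).trans (add_le_add (hD _ _) ih)
      _ = (↑(n + 1) + 1) * D := by push_cast; ring

theorem abs_le_of_defect_le {C : ℝ} (hC : ∀ g, |f g| ≤ C)
    (hD : ∀ g h, |f (g * h) - f g - f h| ≤ D) (g : M) : |f g| ≤ D := by
  refine le_of_forall_nat_mul_le_add (c := C + D) fun n => ?_
  have hpow := abs_map_pow_sub_nat_mul_le hD g n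
  have hlower : n * |f g| - |f (g ^ n)| ≤ |f (g ^ n) - n * f g| := by
    rw [abs_sub_comm]
    simpa only [abs_mul, Nat.abs_cast] using abs_sub_abs_le_abs_sub ((n : ℝ) * f g) (f (g ^ n))
  linarith [hC (g ^ n)]

end Quasimorphism

theorem abs_le_supNorm {X : Type*} {f : X → ℝ} (hbdd : ∃ C : ℝ, ∀ x, |f x| ≤ C) (x : X) :
    |f x| ≤ supNorm f := by
  obtain ⟨C, hC⟩ := hbdd
  exact le_ciSup ⟨C, by rintro _ ⟨y, rfl⟩; exact hC y⟩ x

section Norms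

variable {Γ : Type*} [Group Γ] {f : Γ → ℝ}

theorem abs_defect_le_defectNorm (hbdd : ∃ C : ℝ, ∀ g : Γ, |f g| ≤ C) (g h : Γ) :
    |f (g * h) - f g - f h| ≤ defectNorm f := by
  obtain ⟨C, hC⟩ := hbdd
  refine le_ciSup (f := fun p : Γ × Γ => |f (p.1 * p.2) - f p.1 - f p.2|) ⟨3 * C, ?_⟩ (g, h)
  rintro _ ⟨⟨x, y⟩, rfl⟩
  linarith [abs_sub_sub_le_add_add (f (x * y)) (f x) (f y), hC (x * y), hC x, hC y]

theorem supNorm_le_defectNorm (hbdd : ∃ C : ℝ, ∀ g : Γ, |f g| ≤ C) :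
    supNorm f ≤ defectNorm f := by
  obtain ⟨C, hC⟩ := hbdd
  exact ciSup_le (abs_le_of_defect_le hC (abs_defect_le_defectNorm ⟨C, hC⟩))

theorem defectNorm_le_three_mul_supNorm (hbdd : ∃ C : ℝ, ∀ g : Γ, |f g| ≤ C) :
    defectNorm f ≤ 3 * supNorm f := by
  refine ciSup_le fun p => ?_
  linarith [abs_sub_sub_le_add_add (f (p.1 * p.2)) (f p.1) (f p.2),
    abs_le_supNorm hbdd (p.1 * p.2), abs_le_supNorm hbdd p.1, abs_le_supNorm hbdd p.2]

end Norms

theorem defectNorm_equiv_supNorm_general {Γ : Type*} [Group Γ] (f : Γ → ℝ)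
    (hbdd : ∃ C : ℝ, ∀ g : Γ, |f g| ≤ C) :
    supNorm f ≤ defectNorm f ∧ defectNorm f ≤ 3 * supNorm f :=
  ⟨supNorm_le_defectNorm hbdd, defectNorm_le_three_mul_supNorm hbdd⟩

/-- **Equivalence of the defect norm and the sup norm** on bounded alternating
functions: `‖f‖_∞ ≤ ‖f‖ ≤ 3‖f‖_∞`. -/
theorem defectNorm_equiv_supNorm {Γ : Type*} [Group Γ] (f : Γ → ℝ)
    (hbdd : ∃ C : ℝ, ∀ g : Γ, |f g| ≤ C)
    (halt : ∀ g : Γ, f g⁻¹ = -f g) :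
    supNorm f ≤ defectNorm f ∧ defectNorm f ≤ 3 * supNorm f :=
  defectNorm_equiv_supNorm_general f hbdd
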